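/- (Theorem 5, exploitation of mean-based learners) Consider the bimatrix game with optimizer actions A = {Top, Bottom} and learner actions B = {Left, Mid, Right}, with parameter γ > 0, where the utility pairs (u_O, u_L) are: (Top, Left) = (0, √γ), (Top, Mid) = (−2, −1), (Top, Right) = (−2, 0), (Bottom, Left) = (0, −1), (Bottom, Mid) = (−2, 1), (Bottom, Right) = (2, 0). For every ε > 0 there exists γ₀ > 0 such that for every γ ∈ (0, γ₀) there exists T₀ such that for every even T ≥ T₀ the following holds. Let the optimizer play a^t = Top for 1 ≤ t ≤ T/2 and a^t = Bottom for T/2 < t ≤ T, and define rewards r(b, t) = u_L(a^t, b) for b ∈ B. Then every sequence of mixed plays p_1, …, p_T ∈ Δ(B) that is γ-mean-based with respect to these rewards satisfies Σ_{t=1}^T Σ_{b ∈ B} p_t(b)·u_O(a^t, b) ≥ (1 − ε)·T. In particular, the optimizer's utility exceeds V·T = 0, where V = 0 is the Stackelberg value of this game. -/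
import Mathlib


open Finset

/-- A probability distribution (mixed strategy) on a finite type. -/
def IsDist {X : Type*} [Fintype X] (f : X → ℝ) : Prop :=
  (∀ x, 0 ≤ f x) ∧ ∑ x, f x = 1

/-- A sequence of mixed plays `p` is `γ`-mean-based with respect to rewards `r`
if whenever the cumulative reward of action `i` before round `t` is less than
that of action `j` minus `γT`, action `i` is played with probability at most
`γ` at round `t`. -/
def MeanBased {B : Type*} [Fintype B] {T : ℕ} (γ : ℝ) (r : B → Fin T → ℝ)
    (p : Fin T → B → ℝ) : Prop :=
  ∀ (t : Fin T) (i j : B),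
    (∑ s ∈ univ.filter (fun s : Fin T => s < t), r i s)
      < (∑ s ∈ univ.filter (fun s : Fin T => s < t), r j s) - γ * T →
    p t i ≤ γ

/-- The optimizer's payoff matrix of the example game: rows are Top, Bottom;
columns are Left, Mid, Right. -/
def uOEx : Fin 2 → Fin 3 → ℝ := ![![0, -2, -2], ![0, -2, 2]]

/-- The learner's payoff matrix of the example game with parameter `γ`
(the (Top, Left) entry is `√γ`). -/
noncomputable def uLEx (γ : ℝ) : Fin 2 → Fin 3 → ℝ :=
  ![![Real.sqrt γ, -1, 0], ![-1, 1, 0]]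

/-- The optimizer's gameplay: Top (`0`) for the first `T/2` rounds, then
Bottom (`1`) for the remaining rounds. -/
def optPlay (T : ℕ) (t : Fin T) : Fin 2 := if (t : ℕ) < T / 2 then 0 else 1

lemma sum_ite_range (n m : ℕ) (a b : ℝ) :
    ∑ k ∈ range n, (if k < m then a else b)
      = ((min n m : ℕ) : ℝ) * a + ((n - min n m : ℕ) : ℝ) * b := by
  induction n with
  | zero => simp
  | succ n ih =>
    rw [Finset.sum_range_succ, ih]
    by_cases hc : n < m
    · have h1 : min (n+1) m = n+1 := by omega
      have h2 : min n m = n := by omega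
      rw [if_pos hc, h1, h2, Nat.sub_self, Nat.sub_self]
      push_cast; ring
    · have h1 : min (n+1) m = m := by omega
      have h2 : min n m = m := by omega
      have h3 : n + 1 - m = (n - m) + 1 := by omega
      rw [if_neg hc, h1, h2, h3]
      push_cast; ring

lemma cum_sum (T : ℕ) (γ : ℝ) (t : Fin T) (i : Fin 3) :
    ∑ s ∈ univ.filter (fun s : Fin T => s < t), uLEx γ (optPlay T s) i
      = ((min t.val (T/2) : ℕ) : ℝ) * uLEx γ 0 i
        + ((t.val - min t.val (T/2) : ℕ) : ℝ) * uLEx γ 1 i := by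
  have key : ∀ s : Fin T, uLEx γ (optPlay T s) i
      = if (s:ℕ) < T/2 then uLEx γ 0 i else uLEx γ 1 i := by
    intro s; unfold optPlay; split <;> rfl
  rw [Finset.sum_congr rfl (fun s _ => key s), Finset.sum_filter]
  have : (∑ s : Fin T, if s < t then (if (s:ℕ) < T/2 then uLEx γ 0 i else uLEx γ 1 i) else 0)
      = ∑ k ∈ range T, (if k < t.val then (if k < T/2 then uLEx γ 0 i else uLEx γ 1 i) else 0) := by
    rw [← Fin.sum_univ_eq_sum_range]
    simp only [Fin.lt_def]
  rw [this, ← Finset.sum_filter]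
  have hf : (range T).filter (fun k => k < t.val) = range t.val := by
    have := t.isLt
    ext k; simp only [mem_filter, mem_range]; omega
  rw [hf, sum_ite_range]


/-- Theorem 5: in the example game, for every `ε > 0`, for all sufficiently
small `γ > 0` and all sufficiently large even horizons `T`, playing Top for the
first half of the rounds and Bottom for the second half guarantees the
optimizer utility at least `(1 − ε)·T` against every `γ`-mean-based learner. -/
theorem stmt11 :
    ∀ ε : ℝ, 0 < ε → ∃ γ₀ : ℝ, 0 < γ₀ ∧ ∀ γ : ℝ, 0 < γ → γ < γ₀ →
      ∃ T₀ : ℕ, ∀ T : ℕ, T₀ ≤ T → Even T →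
        ∀ p : Fin T → Fin 3 → ℝ, (∀ t, IsDist (p t)) →
          MeanBased γ (fun b t => uLEx γ (optPlay T t) b) p →
          (1 - ε) * T ≤ ∑ t : Fin T, ∑ b : Fin 3, p t b * uOEx (optPlay T t) b := by
  intro ε hε
  refine ⟨min 1 ((ε/44)^2), by positivity, ?_⟩
  intro γ hγ hγlt
  refine ⟨max 1 ⌈(24:ℝ)/ε⌉₊, ?_⟩
  intro T hT hTeven p hp hmb
  classical
  -- basic facts
  obtain ⟨h, hh⟩ := hTeven
  have hT2 : T / 2 = h := by omega
  have hTh : (T : ℝ) = 2 * h := by push_cast; push_cast [hh]; ring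
  have hT1 : 1 ≤ T := le_trans (le_max_left _ _) hT
  have hγ1 : γ < 1 := lt_of_lt_of_le hγlt (min_le_left _ _)
  have hsγ : 0 ≤ Real.sqrt γ := Real.sqrt_nonneg γ
  have hγsq : Real.sqrt γ * Real.sqrt γ = γ := Real.mul_self_sqrt hγ.le
  have hsq1 : Real.sqrt γ ≤ 1 := by
    rw [show (1:ℝ) = Real.sqrt 1 by simp]
    exact Real.sqrt_le_sqrt hγ1.le
  have hγle : γ ≤ Real.sqrt γ := by nlinarith
  have hsqeps : Real.sqrt γ < ε / 44 := by
    have h1 : γ < (ε/44)^2 := lt_of_lt_of_le hγlt (min_le_right _ _)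
    calc Real.sqrt γ < Real.sqrt ((ε/44)^2) := Real.sqrt_lt_sqrt hγ.le h1
    _ = ε/44 := Real.sqrt_sq (by positivity)
  have hTeps : (24:ℝ) ≤ ε * T := by
    have h1 : ((24:ℝ)/ε) ≤ (⌈(24:ℝ)/ε⌉₊ : ℝ) := Nat.le_ceil _
    have h2 : (⌈(24:ℝ)/ε⌉₊ : ℝ) ≤ (T : ℝ) := by
      exact_mod_cast le_trans (le_max_right _ _) hT
    have := le_trans h1 h2
    rw [div_le_iff₀ hε] at this
    nlinarith
  have hTnn : (0:ℝ) ≤ T := Nat.cast_nonneg T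
  -- matrix entries
  have e00 : uLEx γ 0 0 = Real.sqrt γ := rfl
  have e01 : uLEx γ 0 1 = -1 := rfl
  have e02 : uLEx γ 0 2 = 0 := rfl
  have e10 : uLEx γ 1 0 = -1 := rfl
  have e11 : uLEx γ 1 1 = 1 := rfl
  have e12 : uLEx γ 1 2 = 0 := rfl
  -- mean-based in computed form
  have key : ∀ (t : Fin T) (i j : Fin 3),
      ((min t.val (T/2) : ℕ) : ℝ) * uLEx γ 0 i + ((t.val - min t.val (T/2) : ℕ) : ℝ) * uLEx γ 1 i
        < ((min t.val (T/2) : ℕ) : ℝ) * uLEx γ 0 j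
          + ((t.val - min t.val (T/2) : ℕ) : ℝ) * uLEx γ 1 j - γ * T →
      p t i ≤ γ := by
    intro t i j hij
    apply hmb t i j
    show (∑ s ∈ univ.filter (fun s : Fin T => s < t), uLEx γ (optPlay T s) i)
      < (∑ s ∈ univ.filter (fun s : Fin T => s < t), uLEx γ (optPlay T s) j) - γ * T
    rw [cum_sum, cum_sum]
    exact hij
  -- good predicates
  set good1 : Fin T → Prop := fun t => (t:ℕ) < h ∧ Real.sqrt γ * T < (t:ℕ) with hgood1
  set good2 : Fin T → Prop := fun t => h ≤ (t:ℕ) ∧ (h:ℝ) + Real.sqrt γ * h + γ * T < (t:ℕ)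
      ∧ ((t:ℕ):ℝ) < 2*h - γ*T with hgood2
  set bad : Fin T → Prop := fun t => ¬ good1 t ∧ ¬ good2 t with hbaddef
  -- pointwise bound
  have hstep : ∀ t : Fin T,
      (if h ≤ (t:ℕ) then (2:ℝ) else 0) - 6*γ - (if bad t then 4 else 0)
        ≤ ∑ b : Fin 3, p t b * uOEx (optPlay T t) b := by
    intro t
    obtain ⟨hp0, hpsum⟩ := hp t
    have hq0 := hp0 0; have hq1 := hp0 1; have hq2 := hp0 2
    rw [Fin.sum_univ_three] at hpsum
    rw [Fin.sum_univ_three]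
    by_cases hg2 : good2 t
    · obtain ⟨ha, hb, hc⟩ := hg2
      have hmin : min t.val (T/2) = h := by omega
      have hcast : ((t.val - min t.val (T/2) : ℕ) : ℝ) = (t:ℕ) - h := by
        rw [hmin, Nat.cast_sub ha]
      have hx0 : p t 0 ≤ γ := by
        apply key t 0 2
        rw [hcast, hmin, e00, e02, e10, e12]
        push_cast
        linarith
      have hx1 : p t 1 ≤ γ := by
        apply key t 1 2
        rw [hcast, hmin, e01, e02, e11, e12]
        push_cast
        linarith
      have hrow : optPlay T t = 1 := by
        unfold optPlay; rw [if_neg]; omega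
      have hnb : ¬ bad t := fun hbb => hbb.2 ⟨ha, hb, hc⟩
      rw [hrow, if_pos ha, if_neg hnb]
      have o0 : uOEx 1 0 = 0 := rfl
      have o1 : uOEx 1 1 = -2 := rfl
      have o2 : uOEx 1 2 = 2 := rfl
      rw [o0, o1, o2]
      nlinarith
    · by_cases hg1 : good1 t
      · obtain ⟨ha, hb⟩ := hg1
        have hmin : min t.val (T/2) = t.val := by omega
        have hcast : ((t.val - min t.val (T/2) : ℕ) : ℝ) = 0 := by
          rw [hmin, Nat.sub_self]; simp
        have hγT : γ * T < Real.sqrt γ * (t:ℕ) := by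
          have := mul_lt_mul_of_pos_left hb (Real.sqrt_pos.mpr hγ)
          calc γ * T = Real.sqrt γ * (Real.sqrt γ * T) := by rw [← mul_assoc, hγsq]
          _ < Real.sqrt γ * (t:ℕ) := this
        have htnn : (0:ℝ) ≤ ((t:ℕ):ℝ) := Nat.cast_nonneg _
        have hx1 : p t 1 ≤ γ := by
          apply key t 1 0
          rw [hcast, hmin, e00, e01, e10]
          simp only [zero_mul, add_zero]
          linarith
        have hx2 : p t 2 ≤ γ := by
          apply key t 2 0
          rw [hcast, hmin, e00, e02, e10]
          simp only [zero_mul, add_zero, mul_zero]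
          linarith
        have hrow : optPlay T t = 0 := by
          unfold optPlay; rw [if_pos]; omega
        have hnb : ¬ bad t := fun hbb => hbb.1 ⟨ha, hb⟩
        rw [hrow, if_neg (by omega : ¬ h ≤ (t:ℕ)), if_neg hnb]
        have o0 : uOEx 0 0 = 0 := rfl
        have o1 : uOEx 0 1 = -2 := rfl
        have o2 : uOEx 0 2 = -2 := rfl
        rw [o0, o1, o2]
        linarith
      · have hbb : bad t := ⟨hg1, hg2⟩
        rw [if_pos hbb]
        by_cases hr : (t:ℕ) < T / 2
        · have hrow : optPlay T t = 0 := by unfold optPlay; rw [if_pos hr]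
          rw [hrow]
          have o0 : uOEx 0 0 = 0 := rfl
          have o1 : uOEx 0 1 = -2 := rfl
          have o2 : uOEx 0 2 = -2 := rfl
          rw [o0, o1, o2]
          split <;> linarith
        · have hrow : optPlay T t = 1 := by unfold optPlay; rw [if_neg hr]
          rw [hrow]
          have o0 : uOEx 1 0 = 0 := rfl
          have o1 : uOEx 1 1 = -2 := rfl
          have o2 : uOEx 1 2 = 2 := rfl
          rw [o0, o1, o2]
          split <;> linarith
  -- counting bad rounds
  set m1 := ⌊Real.sqrt γ * T⌋₊ with hm1
  set m2 := ⌊Real.sqrt γ * h + γ * T⌋₊ with hm2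
  set m3 := ⌊γ * T⌋₊ with hm3
  set I : Finset ℕ := (Finset.Ico 0 (m1+1) ∪ Finset.Ico h (h+m2+1)) ∪ Finset.Ico (2*h - m3 - 1) (2*h)
    with hI
  have hsub : ∀ t : Fin T, bad t → (t:ℕ) ∈ I := by
    intro t ⟨hng1, hng2⟩
    have htlt : (t:ℕ) < T := t.isLt
    simp only [hI, Finset.mem_union, Finset.mem_Ico]
    by_cases hfh : (t:ℕ) < h
    · left; left
      constructor
      · omega
      · have : ¬ Real.sqrt γ * T < (t:ℕ) := fun hc => hng1 ⟨hfh, hc⟩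
        push_neg at this
        have := Nat.le_floor this
        omega
    · push_neg at hfh
      have hng2' : ¬ (h ≤ (t:ℕ) ∧ ((h:ℝ) + Real.sqrt γ * h + γ * T < ((t:ℕ):ℝ))
          ∧ (((t:ℕ)):ℝ) < 2*h - γ*T) := hng2
      push_neg at hng2'
      rcases lt_or_ge ((h:ℝ) + Real.sqrt γ * h + γ * T) ((t:ℕ):ℝ) with hc1 | hc1
      · -- then second component fails: 2h - γT ≤ t
        have hc2 := hng2' hfh hc1
        right
        have hsub2 : ((2*h - (t:ℕ) : ℕ) : ℝ) ≤ γ * T := by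
          rw [Nat.cast_sub (by omega)]
          push_cast
          linarith
        have := Nat.le_floor hsub2
        omega
      · left; right
        have : ((t:ℕ) - h : ℕ) ≤ m2 := by
          apply Nat.le_floor
          rw [Nat.cast_sub hfh]
          linarith
        omega
  set N := (univ.filter bad).card with hN
  have hNle : N ≤ (m1+1) + (m2+1) + (m3+1) := by
    have h1 : N ≤ I.card := by
      rw [hN]
      exact Finset.card_le_card_of_injOn Fin.val
        (fun t ht => hsub t (Finset.mem_filter.mp ht).2)
        (Fin.val_injective.injOn)
    have h2 : I.card ≤ (m1+1) + (m2+1) + (m3+1) := by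
      calc I.card ≤ (Finset.Ico 0 (m1+1) ∪ Finset.Ico h (h+m2+1)).card
            + (Finset.Ico (2*h - m3 - 1) (2*h)).card := Finset.card_union_le _ _
        _ ≤ ((Finset.Ico 0 (m1+1)).card + (Finset.Ico h (h+m2+1)).card)
            + (Finset.Ico (2*h - m3 - 1) (2*h)).card := by
              gcongr; exact Finset.card_union_le _ _
        _ ≤ (m1+1) + (m2+1) + (m3+1) := by
              simp only [Nat.card_Ico]; omega
    omega
  have hNreal : (N:ℝ) ≤ 2 * Real.sqrt γ * T + 2 * γ * T + 3 := by
    have f1 : (m1:ℝ) ≤ Real.sqrt γ * T := Nat.floor_le (by positivity)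
    have f2 : (m2:ℝ) ≤ Real.sqrt γ * h + γ * T := Nat.floor_le (by positivity)
    have f3 : (m3:ℝ) ≤ γ * T := Nat.floor_le (by positivity)
    have hhT : (h:ℝ) ≤ T := by exact_mod_cast (show h ≤ T by omega)
    have : (N:ℝ) ≤ ((m1+1) + (m2+1) + (m3+1) : ℕ) := by exact_mod_cast hNle
    push_cast at this
    linarith [mul_le_mul_of_nonneg_left hhT hsγ]
  -- sum of lower bounds
  have hsum1 : ∑ t : Fin T, (if h ≤ (t:ℕ) then (2:ℝ) else 0) = 2 * h := by
    have swap : ∀ k : ℕ, (if h ≤ k then (2:ℝ) else 0) = (if k < h then (0:ℝ) else 2) := by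
      intro k; split_ifs with h1 h2 <;> first | rfl | omega
    calc ∑ t : Fin T, (if h ≤ (t:ℕ) then (2:ℝ) else 0)
        = ∑ k ∈ range T, (if k < h then (0:ℝ) else 2) := by
          rw [← Fin.sum_univ_eq_sum_range (fun k => if k < h then (0:ℝ) else 2)]
          exact Finset.sum_congr rfl (fun t _ => swap t)
      _ = ((min T h : ℕ):ℝ) * 0 + ((T - min T h : ℕ):ℝ) * 2 := sum_ite_range T h 0 2
      _ = 2 * h := by
          have hm : min T h = h := by omega
          rw [hm, show T - h = h from by omega]; ring
  have hsum3 : ∑ t : Fin T, (if bad t then (4:ℝ) else 0) = 4 * N := by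
    rw [← Finset.sum_filter, Finset.sum_const, nsmul_eq_mul, hN]; ring
  have htotal : (2:ℝ) * h - 6 * γ * T - 4 * N
      ≤ ∑ t : Fin T, ∑ b : Fin 3, p t b * uOEx (optPlay T t) b := by
    calc (2:ℝ) * h - 6 * γ * T - 4 * N
        = ∑ t : Fin T, ((if h ≤ (t:ℕ) then (2:ℝ) else 0) - 6*γ - (if bad t then 4 else 0)) := by
          rw [Finset.sum_sub_distrib, Finset.sum_sub_distrib, hsum1, hsum3,
            Finset.sum_const, card_univ, Fintype.card_fin, nsmul_eq_mul]
          ring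
      _ ≤ _ := Finset.sum_le_sum (fun t _ => hstep t)
  -- final arithmetic
  have h22 : 22 * Real.sqrt γ * T ≤ (ε/2) * T := by
    have h1 : 22 * Real.sqrt γ ≤ ε/2 := by linarith
    exact mul_le_mul_of_nonneg_right h1 hTnn
  linarith [h22, hNreal, htotal, hTeps, mul_le_mul_of_nonneg_right hγle hTnn]
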